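/- Let m* be an extreme point of the feasible polytope 𝕄(λ,μ), and consider its induced bipartite graph on J ⊔ K. Call a vertex inl j slack if Σ_{k∈K} m*_{jk} < λ_j (tight if equality holds), and a vertex inr k slack if Σ_{j∈J} m*_{jk} < μ_k (tight if equality holds). Then every vertex adjacent in the induced graph to a slack vertex is tight. -/

import Mathlib

/-- The feasible set of matching rates `𝕄(λ,μ)`. -/
def Mset {J K : Type*} [Fintype J] [Fintype K] (lam : J → ℝ) (mu : K → ℝ) :
    Set (J × K → ℝ) :=
  {m | (∀ p, 0 ≤ m p) ∧ (∀ j, ∑ k : K, m (j, k) ≤ lam j) ∧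
    (∀ k, ∑ j : J, m (j, k) ≤ mu k)}

/-- The induced bipartite graph of `m`: the simple graph on `J ⊕ K` whose only
edges join `inl j` to `inr k` when `m (j, k) > 0`. -/
def inducedGraph {J K : Type*} (m : J × K → ℝ) : SimpleGraph (J ⊕ K) where
  Adj u v :=
    (∃ j k, u = Sum.inl j ∧ v = Sum.inr k ∧ 0 < m (j, k)) ∨
    (∃ j k, u = Sum.inr k ∧ v = Sum.inl j ∧ 0 < m (j, k))
  symm := by
    constructor
    rintro u v (⟨j, k, rfl, rfl, h⟩ | ⟨j, k, rfl, rfl, h⟩)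
    · exact Or.inr ⟨j, k, rfl, rfl, h⟩
    · exact Or.inl ⟨j, k, rfl, rfl, h⟩
  loopless := by
    constructor
    rintro u (⟨j, k, h1, h2, _⟩ | ⟨j, k, h1, h2, _⟩) <;> subst h1 <;> simp at h2


/-- A vertex of the induced graph is slack if its constraint in `𝕄(λ,μ)` is
satisfied with strict inequality. -/
def SlackVertex {J K : Type*} [Fintype J] [Fintype K]
    (lam : J → ℝ) (mu : K → ℝ) (m : J × K → ℝ) : J ⊕ K → Prop
  | Sum.inl j => ∑ k : K, m (j, k) < lam j
  | Sum.inr k => ∑ j : J, m (j, k) < mu k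

/-- A vertex of the induced graph is tight if its constraint in `𝕄(λ,μ)` holds
with equality. -/
def TightVertex {J K : Type*} [Fintype J] [Fintype K]
    (lam : J → ℝ) (mu : K → ℝ) (m : J × K → ℝ) : J ⊕ K → Prop
  | Sum.inl j => ∑ k : K, m (j, k) = lam j
  | Sum.inr k => ∑ j : J, m (j, k) = mu k


private lemma key_no_double_slack
    {J K : Type*} [Fintype J] [Fintype K]
    (lam : J → ℝ) (mu : K → ℝ) (m : J × K → ℝ)
    (hm : m ∈ Set.extremePoints ℝ (Mset lam mu))
    (j : J) (k : K) (hpos : 0 < m (j, k))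
    (hrow : ∑ k' : K, m (j, k') < lam j)
    (hcol : ∑ j' : J, m (j', k) < mu k) : False := by
  classical
  obtain ⟨⟨h0, hr, hc⟩, hext⟩ := hm
  set ε : ℝ := min (m (j, k)) (min (lam j - ∑ k' : K, m (j, k')) (mu k - ∑ j' : J, m (j', k)))
    with hεdef
  have hε : 0 < ε := lt_min hpos (lt_min (by linarith) (by linarith))
  have hε1 : ε ≤ m (j, k) := min_le_left _ _
  have hε2 : ε ≤ lam j - ∑ k' : K, m (j, k') := le_trans (min_le_right _ _) (min_le_left _ _)
  have hε3 : ε ≤ mu k - ∑ j' : J, m (j', k) := le_trans (min_le_right _ _) (min_le_right _ _)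
  set pert : ℝ → (J × K → ℝ) := fun δ p => if p = (j, k) then m p + δ else m p with hpert
  have hrowsum : ∀ (δ : ℝ) (j' : J),
      ∑ k' : K, pert δ (j', k') = (∑ k' : K, m (j', k')) + (if j' = j then δ else 0) := by
    intro δ j'
    have h1 : ∑ k' : K, pert δ (j', k')
        = ∑ k' : K, (m (j', k') + if (j', k') = (j, k) then δ else 0) :=
      Finset.sum_congr rfl (by intro k' _; simp only [hpert]; split <;> simp)
    rw [h1, Finset.sum_add_distrib]
    congr 1
    rcases eq_or_ne j' j with rfl | hne
    · simp [Prod.ext_iff, Finset.sum_ite_eq']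
    · simp [Prod.ext_iff, hne]
  have hcolsum : ∀ (δ : ℝ) (k' : K),
      ∑ j' : J, pert δ (j', k') = (∑ j' : J, m (j', k')) + (if k' = k then δ else 0) := by
    intro δ k'
    have h1 : ∑ j' : J, pert δ (j', k')
        = ∑ j' : J, (m (j', k') + if (j', k') = (j, k) then δ else 0) :=
      Finset.sum_congr rfl (by intro j' _; simp only [hpert]; split <;> simp)
    rw [h1, Finset.sum_add_distrib]
    congr 1
    rcases eq_or_ne k' k with rfl | hne
    · simp [Prod.ext_iff, Finset.sum_ite_eq]
    · simp [Prod.ext_iff, hne]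
  have hmemδ : ∀ δ : ℝ, -ε ≤ δ → δ ≤ ε → pert δ ∈ Mset lam mu := by
    intro δ hδ1 hδ2
    refine ⟨?_, ?_, ?_⟩
    · intro p
      simp only [hpert]
      split
      · rename_i h; subst h; linarith [h0 (j, k)]
      · exact h0 p
    · intro j'
      rw [hrowsum]
      rcases eq_or_ne j' j with rfl | hne
      · simp only [if_pos rfl, if_true]; linarith
      · simp only [if_neg hne, add_zero]; exact hr j'
    · intro k'
      rw [hcolsum]
      rcases eq_or_ne k' k with rfl | hne
      · simp only [if_pos rfl, if_true]; linarith
      · simp only [if_neg hne, add_zero]; exact hc k'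
  have ha : pert ε ∈ Mset lam mu := hmemδ ε (by linarith) le_rfl
  have hb : pert (-ε) ∈ Mset lam mu := hmemδ (-ε) le_rfl (by linarith)
  have hseg : m ∈ openSegment ℝ (pert ε) (pert (-ε)) := by
    refine ⟨1/2, 1/2, by norm_num, by norm_num, by norm_num, ?_⟩
    funext p
    simp only [hpert, Pi.add_apply, Pi.smul_apply, smul_eq_mul]
    split <;> ring
  have := hext ha hb hseg
  have h2 : pert ε (j, k) = m (j, k) := by rw [this]
  simp only [hpert, if_pos rfl] at h2
  linarith

/-- Lemma (Property 3): in the induced bipartite graph of an extreme point of `𝕄(λ,μ)`,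
every vertex adjacent to a slack vertex is tight. -/
theorem neighbors_of_slack_are_tight
    {J K : Type*} [Fintype J] [Fintype K] [Nonempty J] [Nonempty K]
    (lam : J → ℝ) (mu : K → ℝ) (hlam : ∀ j, 0 < lam j) (hmu : ∀ k, 0 < mu k)
    (m : J × K → ℝ) (hm : m ∈ Set.extremePoints ℝ (Mset lam mu)) :
    ∀ u v : J ⊕ K, SlackVertex lam mu m u → (inducedGraph m).Adj u v →
      TightVertex lam mu m v := by
  
  intro u v hu hadj
  rcases hadj with ⟨j, k, rfl, rfl, hpos⟩ | ⟨j, k, rfl, rfl, hpos⟩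
  · -- u = inl j slack, v = inr k
    simp only [SlackVertex] at hu
    simp only [TightVertex]
    by_contra hne
    exact key_no_double_slack lam mu m hm j k hpos hu
      (lt_of_le_of_ne (hm.1.2.2 k) hne)
  · simp only [SlackVertex] at hu
    simp only [TightVertex]
    by_contra hne
    exact key_no_double_slack lam mu m hm j k hpos
      (lt_of_le_of_ne (hm.1.2.1 j) hne) hu
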